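/- arXiv:2206.09579 — 6 statements merged into one kernel-verified Lean document; each statement's English description precedes it below -/
import Mathlib

section
/- Let n ≥ 2, let C be a 2×n real matrix and λ ∈ ℝⁿ. If C·A_n = A₂·C + B₂·λᵀ and C·B_n = B₂, then λ has the form λᵀ = (0, 0, λ₁, …, λ_{n−2}) for some real numbers λ₁, …, λ_{n−2}, and C is the 2×n matrix whose first row is (λ₁, λ₂, …, λ_{n−2}, 1, 0) and whose second row is (0, λ₁, …, λ_{n−3}, λ_{n−2}, 1). -/
/-- The `n × n` Brunovsky matrix `A_n`: ones on the superdiagonal, zeros elsewhere. -/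
def Amat (n : ℕ) : Matrix (Fin n) (Fin n) ℝ :=
  Matrix.of fun i j => if (j : ℕ) = (i : ℕ) + 1 then 1 else 0

/-- The Brunovsky input vector `B_n`: last entry `1`, all other entries `0`. -/
def Bvec (n : ℕ) : Fin n → ℝ :=
  fun i => if (i : ℕ) = n - 1 then 1 else 0

/-- The `2 × n` matrix with first row `(λ₁, …, λ_{n-2}, 1, 0)` and
second row `(0, λ₁, …, λ_{n-2}, 1)`, where `λᵢ = l (i+1)` in 0-based indexing,
i.e. `l = (0, 0, λ₁, …, λ_{n-2})`. -/
def Cmat (n : ℕ) (l : Fin n → ℝ) : Matrix (Fin 2) (Fin n) ℝ :=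
  Matrix.of fun i j =>
    if h : (j : ℕ) + 2 - (i : ℕ) < n then l ⟨(j : ℕ) + 2 - (i : ℕ), h⟩
    else if (j : ℕ) + 2 - (i : ℕ) = n then 1 else 0

lemma CA_succ {n : ℕ} (C : Matrix (Fin 2) (Fin n) ℝ) (i : Fin 2) (j : ℕ) (hj : j + 1 < n) :
    (C * Amat n) i ⟨j+1, hj⟩ = C i ⟨j, by omega⟩ := by
  rw [Matrix.mul_apply, Finset.sum_eq_single (⟨j, by omega⟩ : Fin n)]
  · simp [Amat]
  · intro b _ hb
    simp only [Amat, Matrix.of_apply, mul_ite, mul_one, mul_zero, ite_eq_right_iff]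
    intro h; exfalso; apply hb; exact Fin.ext (by simpa using h.symm)
  · simp

lemma CA_zero {n : ℕ} (hn : 0 < n) (C : Matrix (Fin 2) (Fin n) ℝ) (i : Fin 2) :
    (C * Amat n) i ⟨0, hn⟩ = 0 := by
  rw [Matrix.mul_apply]
  apply Finset.sum_eq_zero
  intro k _
  simp [Amat]

lemma AC0 {n : ℕ} (C : Matrix (Fin 2) (Fin n) ℝ) (j : Fin n) :
    (Amat 2 * C) 0 j = C 1 j := by
  simp [Matrix.mul_apply, Amat, Fin.sum_univ_two]

lemma AC1 {n : ℕ} (C : Matrix (Fin 2) (Fin n) ℝ) (j : Fin n) :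
    (Amat 2 * C) 1 j = 0 := by
  simp [Matrix.mul_apply, Amat, Fin.sum_univ_two]

lemma mv {n : ℕ} (hn : 0 < n) (C : Matrix (Fin 2) (Fin n) ℝ) (i : Fin 2) :
    C.mulVec (Bvec n) i = C i ⟨n-1, by omega⟩ := by
  rw [Matrix.mulVec, dotProduct, Finset.sum_eq_single (⟨n-1, by omega⟩ : Fin n)]
  · simp [Bvec]
  · intro b _ hb
    simp only [Bvec, mul_ite, mul_one, mul_zero, ite_eq_right_iff]
    intro h; exfalso; apply hb; exact Fin.ext (by simpa using h)
  · simp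


/-- if `C·A_n = A₂·C + B₂·λᵀ` and `C·B_n = B₂`, then
`λ = (0, 0, λ₁, …, λ_{n-2})` and `C` is the matrix with rows
`(λ₁, …, λ_{n-2}, 1, 0)` and `(0, λ₁, …, λ_{n-2}, 1)`. -/
theorem stmt0 (n : ℕ) (hn : 2 ≤ n) (C : Matrix (Fin 2) (Fin n) ℝ) (lam : Fin n → ℝ)
    (h1 : C * Amat n = Amat 2 * C + Matrix.vecMulVec (Bvec 2) lam)
    (h2 : C.mulVec (Bvec n) = Bvec 2) :
    lam ⟨0, by omega⟩ = 0 ∧ lam ⟨1, by omega⟩ = 0 ∧ C = Cmat n lam := by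
  -- entrywise facts from h2
  have h2' : ∀ i : Fin 2, C i ⟨n-1, by omega⟩ = Bvec 2 i := by
    intro i; rw [← mv (by omega) C i, h2]
  have hC0last : C 0 ⟨n-1, by omega⟩ = 0 := by simpa [Bvec] using h2' 0
  have hC1last : C 1 ⟨n-1, by omega⟩ = 1 := by simpa [Bvec] using h2' 1
  -- entrywise facts from h1
  have e1 : ∀ (i : Fin 2) (j : Fin n), (C * Amat n) i j =
      (Amat 2 * C) i j + Bvec 2 i * lam j := by
    intro i j
    rw [h1]; simp [Matrix.vecMulVec_apply]
  -- lam 0 = 0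
  have hlam0 : lam ⟨0, by omega⟩ = 0 := by
    have := e1 1 ⟨0, by omega⟩
    rw [CA_zero (by omega), AC1] at this
    simpa [Bvec] using this.symm
  -- C 1 0 = 0 : from row 0, column 0
  have hC10 : C 1 ⟨0, by omega⟩ = 0 := by
    have := e1 0 ⟨0, by omega⟩
    rw [CA_zero (by omega), AC0] at this
    simpa [Bvec] using this.symm
  -- C 1 j = lam (j+1) for j+1 < n
  have hC1 : ∀ (j : ℕ) (hj : j + 1 < n), C 1 ⟨j, by omega⟩ = lam ⟨j+1, hj⟩ := by
    intro j hj
    have := e1 1 ⟨j+1, hj⟩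
    rw [CA_succ, AC1] at this
    simpa [Bvec] using this
  -- C 0 j = C 1 (j+1) for j+1 < n
  have hC0 : ∀ (j : ℕ) (hj : j + 1 < n), C 0 ⟨j, by omega⟩ = C 1 ⟨j+1, hj⟩ := by
    intro j hj
    have := e1 0 ⟨j+1, hj⟩
    rw [CA_succ, AC0] at this
    simpa [Bvec] using this
  have hlam1 : lam ⟨1, by omega⟩ = 0 := by
    rw [← hC1 0 (by omega), hC10]
  refine ⟨hlam0, hlam1, ?_⟩
  ext i j
  have hj := j.isLt
  fin_cases i
  · -- row 0
    show C 0 j = Cmat n lam 0 j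
    simp only [Cmat, Matrix.of_apply, Fin.val_zero, Nat.sub_zero]
    by_cases h2n : (j:ℕ) + 2 < n
    · rw [dif_pos h2n]
      calc C 0 j = C 1 ⟨(j:ℕ)+1, by omega⟩ := hC0 _ (by omega)
        _ = lam ⟨(j:ℕ)+2, h2n⟩ := hC1 _ h2n
    · rw [dif_neg h2n]
      by_cases hen : (j:ℕ) + 2 = n
      · rw [if_pos hen]
        calc C 0 j = C 1 ⟨(j:ℕ)+1, by omega⟩ := hC0 _ (by omega)
          _ = 1 := by
            have he : (⟨(j:ℕ)+1, by omega⟩ : Fin n) = ⟨n-1, by omega⟩ :=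
              Fin.ext (show (j:ℕ)+1 = n-1 by omega)
            rw [he]; exact hC1last
      · rw [if_neg hen]
        have he : j = ⟨n-1, by omega⟩ := Fin.ext (show (j:ℕ) = n-1 by omega)
        rw [he]; exact hC0last
  · -- row 1
    show C 1 j = Cmat n lam 1 j
    simp only [Cmat, Matrix.of_apply, Fin.val_one]
    by_cases h1n : (j:ℕ) + 1 < n
    · rw [dif_pos (show (j:ℕ)+2-1 < n by omega)]
      exact hC1 _ h1n
    · rw [dif_neg (by omega), if_pos (by omega)]
      have he : j = ⟨n-1, by omega⟩ := Fin.ext (show (j:ℕ) = n-1 by omega)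
      rw [he]; exact hC1last
end

section
/- Let n ≥ 2, let x : ℝ → ℝⁿ and w : ℝ → ℝ be such that x is differentiable with ẋ(t) = A_n x(t) + B_n w(t) for all t, let λ₁, …, λ_{n−2} ∈ ℝ, set λᵀ = (0, 0, λ₁, …, λ_{n−2}), and let C be the 2×n matrix with first row (λ₁, …, λ_{n−2}, 1, 0) and second row (0, λ₁, …, λ_{n−2}, 1). Then y := C x satisfies ẏ(t) = A₂ y(t) + B₂ (w(t) + λᵀ x(t)) for all t; in particular y₂ = ẏ₁, where y₁(t) = x_{n−1}(t) + Σ_{i=1}^{n−2} λᵢ x_i(t), and ÿ₁(t) = w(t) + Σ_{i=1}^{n−2} λᵢ x_{i+2}(t). -/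
/-- The padding of `(λ₁, …, λ_{n-2})` to the vector `λ = (0, 0, λ₁, …, λ_{n-2}) ∈ ℝⁿ`. -/
def pad (n : ℕ) (lam : Fin (n - 2) → ℝ) : Fin n → ℝ :=
  fun k => if h : 2 ≤ (k : ℕ) then lam ⟨(k : ℕ) - 2, by have := k.isLt; omega⟩ else 0

lemma sum_fin_eq_range (n : ℕ) (f : Fin n → ℝ) :
    ∑ i, f i = ∑ k ∈ Finset.range n, if h : k < n then f ⟨k, h⟩ else 0 := by
  rw [← Fin.sum_univ_eq_sum_range (fun k => if h : k < n then f ⟨k, h⟩ else 0) n]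
  exact Finset.sum_congr rfl fun i _ => by simp [i.isLt]

lemma Amat_entry (n : ℕ) (v : Fin n → ℝ) (i : Fin n) :
    (Amat n).mulVec v i = if h : (i : ℕ) + 1 < n then v ⟨(i : ℕ) + 1, h⟩ else 0 := by
  classical
  simp only [Matrix.mulVec, dotProduct, Amat, Matrix.of_apply, ite_mul, one_mul,
    zero_mul]
  split
  · next h =>
    rw [Finset.sum_eq_single (⟨(i : ℕ) + 1, h⟩ : Fin n)]
    · simp
    · intro b _ hb
      rw [if_neg]; intro hc; exact hb (Fin.ext hc)
    · simp
  · next h =>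
    apply Finset.sum_eq_zero
    intro j _
    rw [if_neg]; intro hc; exact h (hc ▸ j.isLt)

lemma Cmat_zero (m : ℕ) (lam : Fin m → ℝ) (v : Fin (m + 2) → ℝ) :
    (Cmat (m + 2) (pad (m + 2) lam)).mulVec v 0
      = v ⟨m, by omega⟩ + ∑ i : Fin m, lam i * v ⟨(i : ℕ), by omega⟩ := by
  classical
  simp only [Matrix.mulVec, dotProduct]
  rw [sum_fin_eq_range (m + 2) (fun j => Cmat (m + 2) (pad (m + 2) lam) 0 j * v j),
    sum_fin_eq_range m (fun i => lam i * v ⟨(i : ℕ), by omega⟩),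
    Finset.sum_range_succ, Finset.sum_range_succ]
  have key : ∀ k ∈ Finset.range m,
      (if h : k < m + 2 then Cmat (m + 2) (pad (m + 2) lam) 0 ⟨k, h⟩ * v ⟨k, h⟩ else 0)
      = (if h : k < m then lam ⟨k, h⟩ * v ⟨(k : ℕ), by omega⟩ else 0) := by
    intro k hk
    have hk' : k < m := Finset.mem_range.mp hk
    rw [dif_pos (by omega : k < m + 2), dif_pos hk']
    simp only [Cmat, pad, Matrix.of_apply, Fin.val_zero, Nat.sub_zero, Fin.val_mk]
    rw [dif_pos (by omega : k + 2 < m + 2), dif_pos (by omega : 2 ≤ k + 2)]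
    rfl
  rw [Finset.sum_congr rfl key]
  have h2 : (if h : m < m + 2 then
      Cmat (m + 2) (pad (m + 2) lam) 0 ⟨m, h⟩ * v ⟨m, h⟩ else 0) = v ⟨m, by omega⟩ := by
    rw [dif_pos (by omega : m < m + 2)]
    simp only [Cmat, Matrix.of_apply, Fin.val_zero, Nat.sub_zero, Fin.val_mk]
    rw [dif_neg (by omega : ¬ (m + 2 < m + 2))]
    simp
  have h3 : (if h : m + 1 < m + 2 then
      Cmat (m + 2) (pad (m + 2) lam) 0 ⟨m + 1, h⟩ * v ⟨m + 1, h⟩ else 0) = 0 := by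
    rw [dif_pos (by omega : m + 1 < m + 2)]
    simp only [Cmat, Matrix.of_apply, Fin.val_zero, Nat.sub_zero, Fin.val_mk]
    rw [dif_neg (by omega : ¬ (m + 1 + 2 < m + 2)), if_neg (by omega : ¬ (m + 1 + 2 = m + 2))]
    simp
  rw [h2, h3]
  ring

lemma Cmat_one (m : ℕ) (lam : Fin m → ℝ) (v : Fin (m + 2) → ℝ) :
    (Cmat (m + 2) (pad (m + 2) lam)).mulVec v 1
      = v ⟨m + 1, by omega⟩ + ∑ i : Fin m, lam i * v ⟨(i : ℕ) + 1, by omega⟩ := by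
  classical
  simp only [Matrix.mulVec, dotProduct]
  rw [sum_fin_eq_range (m + 2) (fun j => Cmat (m + 2) (pad (m + 2) lam) 1 j * v j),
    sum_fin_eq_range m (fun i => lam i * v ⟨(i : ℕ) + 1, by omega⟩),
    Finset.sum_range_succ, Finset.sum_range_succ']
  have key : ∀ k ∈ Finset.range m,
      (if h : k + 1 < m + 2 then
        Cmat (m + 2) (pad (m + 2) lam) 1 ⟨k + 1, h⟩ * v ⟨k + 1, h⟩ else 0)
      = (if h : k < m then lam ⟨k, h⟩ * v ⟨(k : ℕ) + 1, by omega⟩ else 0) := by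
    intro k hk
    have hk' : k < m := Finset.mem_range.mp hk
    rw [dif_pos (by omega : k + 1 < m + 2), dif_pos hk']
    simp only [Cmat, pad, Matrix.of_apply, Fin.val_one, Fin.val_mk]
    simp only [show k + 1 + 2 - 1 = k + 2 from rfl]
    rw [dif_pos (by omega : k + 2 < m + 2), dif_pos (by omega : 2 ≤ k + 2)]
    rfl
  rw [Finset.sum_congr rfl key]
  have h2 : (if h : (0 : ℕ) < m + 2 then
      Cmat (m + 2) (pad (m + 2) lam) 1 ⟨0, h⟩ * v ⟨0, h⟩ else 0) = 0 := by
    rw [dif_pos (by omega : (0 : ℕ) < m + 2)]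
    simp only [Cmat, pad, Matrix.of_apply, Fin.val_one, Fin.val_mk]
    simp only [show (0 : ℕ) + 2 - 1 = 1 from rfl]
    rw [dif_pos (by omega : 1 < m + 2)]
    rw [dif_neg (by norm_num : ¬ ((2 : ℕ) ≤ 1))]
    simp
  have h3 : (if h : m + 1 < m + 2 then
      Cmat (m + 2) (pad (m + 2) lam) 1 ⟨m + 1, h⟩ * v ⟨m + 1, h⟩ else 0)
      = v ⟨m + 1, by omega⟩ := by
    rw [dif_pos (by omega : m + 1 < m + 2)]
    simp only [Cmat, Matrix.of_apply, Fin.val_one, Fin.val_mk]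
    simp only [show m + 1 + 2 - 1 = m + 2 from rfl]
    rw [dif_neg (by omega : ¬ (m + 2 < m + 2))]
    simp
  rw [h2, h3]
  ring

lemma padsum (m : ℕ) (lam : Fin m → ℝ) (v : Fin (m + 2) → ℝ) :
    ∑ k, pad (m + 2) lam k * v k = ∑ i : Fin m, lam i * v ⟨(i : ℕ) + 2, by omega⟩ := by
  classical
  rw [sum_fin_eq_range (m + 2) (fun k => pad (m + 2) lam k * v k),
    sum_fin_eq_range m (fun i => lam i * v ⟨(i : ℕ) + 2, by omega⟩),
    Finset.sum_range_succ', Finset.sum_range_succ']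
  have key : ∀ k ∈ Finset.range m,
      (if h : k + 1 + 1 < m + 2 then
        pad (m + 2) lam ⟨k + 1 + 1, h⟩ * v ⟨k + 1 + 1, h⟩ else 0)
      = (if h : k < m then lam ⟨k, h⟩ * v ⟨(k : ℕ) + 2, by omega⟩ else 0) := by
    intro k hk
    have hk' : k < m := Finset.mem_range.mp hk
    rw [dif_pos (by omega : k + 1 + 1 < m + 2), dif_pos hk']
    simp only [pad, Fin.val_mk]
    rw [dif_pos (by omega : 2 ≤ k + 1 + 1)]
    rfl
  rw [Finset.sum_congr rfl key]
  have h2 : (if h : (0 : ℕ) + 1 < m + 2 then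
      pad (m + 2) lam ⟨0 + 1, h⟩ * v ⟨0 + 1, h⟩ else 0) = 0 := by
    rw [dif_pos (by omega : (0 : ℕ) + 1 < m + 2)]
    simp only [pad, Fin.val_mk]
    rw [dif_neg (by omega : ¬ (2 ≤ (0 : ℕ) + 1))]
    simp
  have h3 : (if h : (0 : ℕ) < m + 2 then
      pad (m + 2) lam ⟨0, h⟩ * v ⟨0, h⟩ else 0) = 0 := by
    rw [dif_pos (by omega : (0 : ℕ) < m + 2)]
    simp only [pad, Fin.val_mk]
    rw [dif_neg (by omega : ¬ (2 ≤ (0 : ℕ)))]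
    simp
  rw [h2, h3]
  ring

/-- for a solution of the Brunovsky chain `ẋ = A_n x + B_n w`,
the output `y = Cx` satisfies `ẏ = A₂ y + B₂ (w + λᵀ x)`; in particular
`y₁ = x_{n-1} + Σ λᵢ xᵢ`, `y₂ = ẏ₁`, and `ÿ₁ = w + Σ λᵢ x_{i+2}`. -/
theorem stmt2 (n : ℕ) (hn : 2 ≤ n) (x : ℝ → Fin n → ℝ) (w : ℝ → ℝ)
    (lam : Fin (n - 2) → ℝ)
    (hx : ∀ t, HasDerivAt x ((Amat n).mulVec (x t) + w t • Bvec n) t)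
    (y : ℝ → Fin 2 → ℝ) (hy : ∀ t, y t = (Cmat n (pad n lam)).mulVec (x t)) :
    (∀ t, HasDerivAt y
        ((Amat 2).mulVec (y t) + (w t + ∑ k, pad n lam k * x t k) • Bvec 2) t) ∧
    (∀ t, y t 0 = x t ⟨n - 2, by omega⟩
        + ∑ i : Fin (n - 2), lam i * x t ⟨(i : ℕ), by have := i.isLt; omega⟩) ∧
    (∀ t, HasDerivAt (fun s => y s 0) (y t 1) t) ∧
    (∀ t, HasDerivAt (fun s => y s 1)
        (w t + ∑ i : Fin (n - 2), lam i * x t ⟨(i : ℕ) + 2, by have := i.isLt; omega⟩) t) := by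
  obtain ⟨m, rfl⟩ : ∃ m, n = m + 2 := ⟨n - 2, by omega⟩
  -- componentwise derivatives of x
  have hasD : ∀ t (i : Fin (m + 2)), HasDerivAt (fun s => x s i)
      (((Amat (m + 2)).mulVec (x t) + w t • Bvec (m + 2)) i) t :=
    fun t i => hasDerivAt_pi.mp (hx t) i
  have hstep : ∀ t (i : ℕ) (hi : i + 1 < m + 2),
      HasDerivAt (fun s => x s ⟨i, by omega⟩) (x t ⟨i + 1, hi⟩) t := by
    intro t i hi
    have hv : ((Amat (m + 2)).mulVec (x t) + w t • Bvec (m + 2)) ⟨i, by omega⟩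
        = x t ⟨i + 1, hi⟩ := by
      simp only [Pi.add_apply, Pi.smul_apply, smul_eq_mul, Amat_entry, Bvec, Fin.val_mk]
      rw [dif_pos hi, if_neg (by omega : ¬ (i = m + 2 - 1))]
      simp
    exact hv ▸ hasD t ⟨i, by omega⟩
  have hlast : ∀ t, HasDerivAt (fun s => x s ⟨m + 1, by omega⟩) (w t) t := by
    intro t
    have hv : ((Amat (m + 2)).mulVec (x t) + w t • Bvec (m + 2)) ⟨m + 1, by omega⟩
        = w t := by
      simp only [Pi.add_apply, Pi.smul_apply, smul_eq_mul, Amat_entry, Bvec, Fin.val_mk]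
      rw [dif_neg (by omega : ¬ (m + 1 + 1 < m + 2)), if_pos (by omega : m + 1 = m + 2 - 1)]
      simp
    exact hv ▸ hasD t ⟨m + 1, by omega⟩
  -- explicit formulas for y
  have E0 : ∀ t, y t 0 = x t ⟨m, by omega⟩
      + ∑ i : Fin m, lam i * x t ⟨(i : ℕ), by omega⟩ := by
    intro t; rw [hy t]; exact Cmat_zero m lam (x t)
  have E1 : ∀ t, y t 1 = x t ⟨m + 1, by omega⟩
      + ∑ i : Fin m, lam i * x t ⟨(i : ℕ) + 1, by omega⟩ := by
    intro t; rw [hy t]; exact Cmat_one m lam (x t)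
  have D0 : ∀ t, HasDerivAt (fun s => y s 0) (y t 1) t := by
    intro t
    have hfun : (fun s => y s 0) = fun s => x s ⟨m, by omega⟩
        + ∑ i : Fin m, lam i * x s ⟨(i : ℕ), by omega⟩ := funext fun s => E0 s
    rw [hfun, E1 t]
    exact (hstep t m (by omega)).add
      (HasDerivAt.fun_sum fun i _ => ((hstep t i (by omega)).const_mul (lam i)))
  have D1 : ∀ t, HasDerivAt (fun s => y s 1)
      (w t + ∑ i : Fin m, lam i * x t ⟨(i : ℕ) + 2, by omega⟩) t := by
    intro t
    have hfun : (fun s => y s 1) = fun s => x s ⟨m + 1, by omega⟩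
        + ∑ i : Fin m, lam i * x s ⟨(i : ℕ) + 1, by omega⟩ := funext fun s => E1 s
    rw [hfun]
    exact (hlast t).add
      (HasDerivAt.fun_sum fun i _ => ((hstep t ((i : ℕ) + 1) (by omega)).const_mul (lam i)))
  refine ⟨?_, fun t => E0 t, D0, fun t => D1 t⟩
  intro t
  apply hasDerivAt_pi.mpr
  rw [Fin.forall_fin_two]
  constructor
  · have hv : ((Amat 2).mulVec (y t)
        + (w t + ∑ k, pad (m + 2) lam k * x t k) • Bvec 2) 0 = y t 1 := by
      simp only [Pi.add_apply, Pi.smul_apply, smul_eq_mul, Amat_entry, Bvec, Fin.val_zero]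
      norm_num
    rw [hv]
    exact D0 t
  · have hv : ((Amat 2).mulVec (y t)
        + (w t + ∑ k, pad (m + 2) lam k * x t k) • Bvec 2) 1
        = w t + ∑ i : Fin m, lam i * x t ⟨(i : ℕ) + 2, by omega⟩ := by
      simp only [Pi.add_apply, Pi.smul_apply, smul_eq_mul, Amat_entry, Bvec, Fin.val_one]
      rw [padsum m lam (x t)]
      norm_num
    rw [hv]
    exact D1 t
end

section
/- Let ω > 0 and let φ, ψ : ℝ → ℝ be twice differentiable and satisfy the undamped transformed balanced swing equations φ̈ + ω² sin φ = v and ψ̈ = v for some v : ℝ → ℝ. Define x₁ = (ψ − φ)/ω², x₂ = (ψ̇ − φ̇)/ω², x₃ = sin φ, x₄ = φ̇ cos φ, and w = −(φ̇² + ω² cos φ) sin φ + (cos φ) v. Then x = (x₁, x₂, x₃, x₄) satisfies the Brunovsky form ẋ(t) = A₄ x(t) + B₄ w(t) for all t, i.e., ẋ₁ = x₂, ẋ₂ = x₃, ẋ₃ = x₄, ẋ₄ = w. Moreover, at every t with cos φ(t) ≠ 0, v(t) = (w(t) + (φ̇(t)² + ω² cos φ(t)) sin φ(t)) / cos φ(t).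 -/
/-- feedback linearization of the undamped transformed balanced
swing `φ̈ + ω² sin φ = v`, `ψ̈ = v`: the variables
`x₁ = (ψ-φ)/ω²`, `x₂ = (ψ̇-φ̇)/ω²`, `x₃ = sin φ`, `x₄ = φ̇ cos φ` with
`w = -(φ̇² + ω² cos φ) sin φ + (cos φ) v` satisfy the Brunovsky chain
`ẋ₁ = x₂`, `ẋ₂ = x₃`, `ẋ₃ = x₄`, `ẋ₄ = w`, and wherever `cos φ ≠ 0`,
`v = (w + (φ̇² + ω² cos φ) sin φ)/cos φ`. -/
theorem stmt8 (ω : ℝ) (hω : 0 < ω)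
    (φ φ' φ'' ψ ψ' ψ'' v : ℝ → ℝ)
    (hφ : ∀ t, HasDerivAt φ (φ' t) t) (hφ' : ∀ t, HasDerivAt φ' (φ'' t) t)
    (hψ : ∀ t, HasDerivAt ψ (ψ' t) t) (hψ' : ∀ t, HasDerivAt ψ' (ψ'' t) t)
    (heq1 : ∀ t, φ'' t + ω ^ 2 * Real.sin (φ t) = v t)
    (heq2 : ∀ t, ψ'' t = v t)
    (x1 x2 x3 x4 w : ℝ → ℝ)
    (hx1 : ∀ t, x1 t = (ψ t - φ t) / ω ^ 2)
    (hx2 : ∀ t, x2 t = (ψ' t - φ' t) / ω ^ 2)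
    (hx3 : ∀ t, x3 t = Real.sin (φ t))
    (hx4 : ∀ t, x4 t = φ' t * Real.cos (φ t))
    (hw : ∀ t, w t = -((φ' t) ^ 2 + ω ^ 2 * Real.cos (φ t)) * Real.sin (φ t)
        + Real.cos (φ t) * v t) :
    (∀ t, HasDerivAt x1 (x2 t) t) ∧
    (∀ t, HasDerivAt x2 (x3 t) t) ∧
    (∀ t, HasDerivAt x3 (x4 t) t) ∧
    (∀ t, HasDerivAt x4 (w t) t) ∧
    (∀ t, Real.cos (φ t) ≠ 0 →
      v t = (w t + ((φ' t) ^ 2 + ω ^ 2 * Real.cos (φ t)) * Real.sin (φ t))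
            / Real.cos (φ t)) := by
  have hω2 : (ω:ℝ) ^ 2 ≠ 0 := by positivity
  refine ⟨?_, ?_, ?_, ?_, ?_⟩
  · intro t
    have h := (((hψ t).sub (hφ t)).div_const (ω ^ 2))
    have : HasDerivAt (fun s => (ψ s - φ s) / ω ^ 2) (x2 t) t := by
      rw [hx2]; exact h
    exact this.congr_of_eventuallyEq (Filter.Eventually.of_forall fun s => (hx1 s))
  · intro t
    have h := (((hψ' t).sub (hφ' t)).div_const (ω ^ 2))
    have : HasDerivAt (fun s => (ψ' s - φ' s) / ω ^ 2) (x3 t) t := by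
      have hv : (ψ'' t - φ'' t) / ω ^ 2 = x3 t := by
        rw [hx3]
        have e1 := heq1 t; have e2 := heq2 t
        field_simp
        nlinarith [e1, e2]
      rw [← hv]; exact h
    exact this.congr_of_eventuallyEq (Filter.Eventually.of_forall fun s => (hx2 s))
  · intro t
    have h := (hφ t).sin
    have : HasDerivAt (fun s => Real.sin (φ s)) (x4 t) t := by
      rw [hx4]; simpa [mul_comm] using h
    exact this.congr_of_eventuallyEq (Filter.Eventually.of_forall fun s => (hx3 s))
  · intro t
    have h := (hφ' t).mul (hφ t).cos
    have : HasDerivAt (fun s => φ' s * Real.cos (φ s)) (w t) t := by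
      have hv : φ'' t * Real.cos (φ t) + φ' t * (-Real.sin (φ t) * φ' t) = w t := by
        rw [hw]
        have e1 : φ'' t = v t - ω ^ 2 * Real.sin (φ t) := by linarith [heq1 t]
        rw [e1]; ring
      rw [← hv]; exact h
    exact this.congr_of_eventuallyEq (Filter.Eventually.of_forall fun s => (hx4 s))
  · intro t hc
    rw [hw t]
    field_simp
    ring
end

section
/- Let λ₁, λ₂, Ω, r > 0 and p ∈ ℝ, set y₁(t) = (r√2/Ω) cos(Ω t + p), and suppose the amplitude bound r Ω √2 / √((λ₁ − Ω²)² + λ₂² Ω²) ≤ 1 holds. Let x₁(t) = A cos(Ω t + p − δ) with A = (r√2/Ω) / √((λ₁ − Ω²)² + λ₂² Ω²) be a steady-state solution of ẍ₁ + λ₂ ẋ₁ + λ₁ x₁ = y₁ (with suitable phase δ). Then the function φ(t) := arcsin(ẍ₁(t)) is well defined, periodic with period 2π/Ω, and sup_t |φ(t)| = arcsin( r Ω √2 / √((λ₁ − Ω²)² + λ₂² Ω²) ). -/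
lemma abs_arcsin' (x : ℝ) : |Real.arcsin x| = Real.arcsin |x| := by
  rcases le_or_gt 0 x with h | h
  · rw [abs_of_nonneg h, abs_of_nonneg (Real.arcsin_nonneg.2 h)]
  · rw [abs_of_nonpos (Real.arcsin_nonpos.2 h.le), ← Real.arcsin_neg,
      abs_of_neg h]

/-- for the steady state `x₁(t) = A cos(Ωt + p - δ)`,
`A = (r√2/Ω)/√((λ₁-Ω²)² + λ₂²Ω²)`, of `ẍ₁ + λ₂ẋ₁ + λ₁x₁ = y₁` with
`y₁(t) = (r√2/Ω) cos(Ωt + p)`, under the amplitude bound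
`rΩ√2/√((λ₁-Ω²)² + λ₂²Ω²) ≤ 1` the swing angle `φ = arcsin(ẍ₁)` is well
defined (`|ẍ₁| ≤ 1`), periodic with period `2π/Ω`, and
`sup_t |φ(t)| = arcsin(rΩ√2/√((λ₁-Ω²)² + λ₂²Ω²))`. -/
theorem stmt11 (l1 l2 Ω r p δ : ℝ) (hl1 : 0 < l1) (hl2 : 0 < l2) (hΩ : 0 < Ω)
    (hr : 0 < r)
    (hbound : r * Ω * Real.sqrt 2
        / Real.sqrt ((l1 - Ω ^ 2) ^ 2 + l2 ^ 2 * Ω ^ 2) ≤ 1)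
    (y1 x1 : ℝ → ℝ)
    (hy1 : ∀ t, y1 t = (r * Real.sqrt 2 / Ω) * Real.cos (Ω * t + p))
    (hx1 : ∀ t, x1 t = (r * Real.sqrt 2 / Ω)
        / Real.sqrt ((l1 - Ω ^ 2) ^ 2 + l2 ^ 2 * Ω ^ 2)
        * Real.cos (Ω * t + p - δ))
    (hsol : ∀ t, deriv (deriv x1) t + l2 * deriv x1 t + l1 * x1 t = y1 t) :
    (∀ t, |deriv (deriv x1) t| ≤ 1) ∧
    Function.Periodic (fun t => Real.arcsin (deriv (deriv x1) t))
      (2 * Real.pi / Ω) ∧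
    (⨆ t : ℝ, |Real.arcsin (deriv (deriv x1) t)|)
      = Real.arcsin (r * Ω * Real.sqrt 2
          / Real.sqrt ((l1 - Ω ^ 2) ^ 2 + l2 ^ 2 * Ω ^ 2)) := by
  have hΩ' : Ω ≠ 0 := ne_of_gt hΩ
  set D := Real.sqrt ((l1 - Ω ^ 2) ^ 2 + l2 ^ 2 * Ω ^ 2) with hD
  have hDpos : 0 < D := Real.sqrt_pos.2 (by positivity)
  set c : ℝ := r * Real.sqrt 2 / Ω / D with hc
  set M : ℝ := r * Ω * Real.sqrt 2 / D with hMdef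
  have hM0 : 0 ≤ M := by positivity
  have hcM : c * Ω ^ 2 = M := by
    rw [hc, hMdef]; field_simp
  have hx1' : x1 = fun t => c * Real.cos (Ω * t + p - δ) := funext hx1
  have hinner : ∀ t : ℝ, HasDerivAt (fun t : ℝ => Ω * t + p - δ) Ω t := by
    intro t
    simpa using (((hasDerivAt_id t).const_mul Ω).add_const p).sub_const δ
  have hd1 : deriv x1 = fun t => c * (-Real.sin (Ω * t + p - δ) * Ω) := by
    funext t
    rw [hx1']
    exact (((Real.hasDerivAt_cos _).comp t (hinner t)).const_mul c).deriv
  have hd2 : ∀ t, deriv (deriv x1) t = -(M * Real.cos (Ω * t + p - δ)) := by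
    intro t
    rw [hd1]
    have h : HasDerivAt (fun t => c * (-Real.sin (Ω * t + p - δ) * Ω))
        (c * (-(Real.cos (Ω * t + p - δ) * Ω) * Ω)) t :=
      ((((Real.hasDerivAt_sin _).comp t (hinner t)).neg).mul_const Ω).const_mul c
    rw [h.deriv, ← hcM]; ring
  have hbd : ∀ t, |deriv (deriv x1) t| ≤ 1 := by
    intro t
    rw [hd2, abs_neg, abs_mul, abs_of_nonneg hM0]
    calc M * |Real.cos (Ω * t + p - δ)| ≤ M * 1 :=
          mul_le_mul_of_nonneg_left (Real.abs_cos_le_one _) hM0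
      _ = M := mul_one M
      _ ≤ 1 := hbound
  refine ⟨hbd, ?_, ?_⟩
  · intro t
    simp only [hd2]
    have : Ω * (t + 2 * Real.pi / Ω) + p - δ = Ω * t + p - δ + 2 * Real.pi := by
      field_simp; ring
    rw [this, Real.cos_add_two_pi]
  · have hval : ∀ t, |Real.arcsin (deriv (deriv x1) t)|
        = Real.arcsin (M * |Real.cos (Ω * t + p - δ)|) := by
      intro t
      rw [hd2, abs_arcsin', abs_neg, abs_mul, abs_of_nonneg hM0]
    have hub : ∀ t, |Real.arcsin (deriv (deriv x1) t)| ≤ Real.arcsin M := by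
      intro t
      rw [hval t]
      exact Real.monotone_arcsin
        (by nlinarith [Real.abs_cos_le_one (Ω * t + p - δ), abs_nonneg (Real.cos (Ω * t + p - δ))])
    apply le_antisymm
    · exact ciSup_le hub
    · have hB : BddAbove (Set.range fun t => |Real.arcsin (deriv (deriv x1) t)|) :=
        ⟨Real.arcsin M, by rintro x ⟨t, rfl⟩; exact hub t⟩
      have := le_ciSup hB ((δ - p) / Ω)
      have hv : |Real.arcsin (deriv (deriv x1) ((δ - p) / Ω))| = Real.arcsin M := by
        rw [hval]
        have : Ω * ((δ - p) / Ω) + p - δ = 0 := by field_simp; ring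
        rw [this, Real.cos_zero, abs_one, mul_one]
      rwa [hv] at this
end

section
/- Let c ≥ 0, ω > 0, and let φ, ψ : ℝ → ℝ be smooth and satisfy the linearized damped system φ̈ + c φ̇ + ω² φ = v and ψ̈ = v for some v : ℝ → ℝ. Then x₁ := (ψ − φ)/ω² − (c/ω⁴)(ψ̇ − φ̇) + (c²/ω⁴) φ satisfies ẍ₁(t) = φ(t) for all t, and consequently the state x = (x₁, ẋ₁, ẍ₁, x₁⁗) satisfies the Brunovsky form ẋ(t) = A₄ x(t) + B₄ w(t) with the new control w := v − ω² φ − c φ̇. -/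
/-- for the linearized damped system `φ̈ + cφ̇ + ω²φ = v`,
`ψ̈ = v`, the damping-corrected output
`x₁ = (ψ-φ)/ω² - (c/ω⁴)(ψ̇-φ̇) + (c²/ω⁴)φ` satisfies `ẍ₁ = φ`, and the state
`x = (x₁, ẋ₁, ẍ₁, x₁''')` satisfies the Brunovsky form `ẋ = A₄x + B₄w` with
`w = v - ω²φ - cφ̇`. -/
theorem stmt13 (c ω : ℝ) (hc : 0 ≤ c) (hω : 0 < ω)
    (φ φ' φ'' ψ ψ' ψ'' v : ℝ → ℝ)
    (hφ : ∀ t, HasDerivAt φ (φ' t) t) (hφ' : ∀ t, HasDerivAt φ' (φ'' t) t)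
    (hψ : ∀ t, HasDerivAt ψ (ψ' t) t) (hψ' : ∀ t, HasDerivAt ψ' (ψ'' t) t)
    (heq1 : ∀ t, φ'' t + c * φ' t + ω ^ 2 * φ t = v t)
    (heq2 : ∀ t, ψ'' t = v t)
    (x1 : ℝ → ℝ)
    (hx1 : ∀ t, x1 t = (ψ t - φ t) / ω ^ 2 - (c / ω ^ 4) * (ψ' t - φ' t)
        + (c ^ 2 / ω ^ 4) * φ t)
    (X : ℝ → Fin 4 → ℝ)
    (hX : ∀ t, X t = ![x1 t, deriv x1 t, deriv (deriv x1) t,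
        deriv (deriv (deriv x1)) t]) :
    (∀ t, deriv (deriv x1) t = φ t) ∧
    (∀ t, HasDerivAt X
        ((Amat 4).mulVec (X t) + (v t - ω ^ 2 * φ t - c * φ' t) • Bvec 4) t) := by
  have hω2 : (ω : ℝ) ^ 2 ≠ 0 := pow_ne_zero _ hω.ne'
  have hω4 : (ω : ℝ) ^ 4 ≠ 0 := pow_ne_zero _ hω.ne'
  have hdiff : ∀ t, ψ'' t - φ'' t = c * φ' t + ω ^ 2 * φ t := by
    intro t
    have h1 := heq1 t
    have h2 := heq2 t
    linarith
  have h1 : ∀ t, HasDerivAt x1 ((ψ' t - φ' t) / ω ^ 2 - (c / ω ^ 2) * φ t) t := by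
    intro t
    have hx1e : x1 = fun t => (ψ t - φ t) / ω ^ 2 - (c / ω ^ 4) * (ψ' t - φ' t)
        + (c ^ 2 / ω ^ 4) * φ t := funext hx1
    rw [hx1e]
    have h : HasDerivAt (fun t => (ψ t - φ t) / ω ^ 2 - (c / ω ^ 4) * (ψ' t - φ' t)
        + (c ^ 2 / ω ^ 4) * φ t)
        ((ψ'' t - φ'' t)⁻¹ * 0 + ((ψ' t - φ' t) / ω ^ 2 - (c / ω ^ 4) * (ψ'' t - φ'' t)
          + (c ^ 2 / ω ^ 4) * φ' t)) t := by
      have := ((((hψ t).sub (hφ t)).div_const ((ω:ℝ) ^ 2)).sub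
        (((hψ' t).sub (hφ' t)).const_mul (c / ω ^ 4))).add ((hφ t).const_mul (c ^ 2 / ω ^ 4))
      exact this.congr_deriv (by ring)
    convert h using 1
    rw [hdiff t]
    field_simp
    try ring
  have hd1 : deriv x1 = fun t => (ψ' t - φ' t) / ω ^ 2 - (c / ω ^ 2) * φ t :=
    funext fun t => (h1 t).deriv
  have h2 : ∀ t, HasDerivAt (deriv x1) (φ t) t := by
    intro t
    rw [hd1]
    have h : HasDerivAt (fun t => (ψ' t - φ' t) / ω ^ 2 - (c / ω ^ 2) * φ t)
        ((ψ'' t - φ'' t) / ω ^ 2 - (c / ω ^ 2) * φ' t) t :=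
      (((hψ' t).sub (hφ' t)).div_const _).sub ((hφ t).const_mul _)
    convert h using 1
    rw [hdiff t]
    field_simp
    try ring
  have hd2 : deriv (deriv x1) = φ := funext fun t => (h2 t).deriv
  have hd3 : deriv (deriv (deriv x1)) = φ' := by
    rw [hd2]; exact funext fun t => (hφ t).deriv
  refine ⟨fun t => by rw [hd2], fun t => ?_⟩
  have hXe : X = fun t => ![x1 t, deriv x1 t, deriv (deriv x1) t,
      deriv (deriv (deriv x1)) t] := funext hX
  have hvec : (Amat 4).mulVec (X t) + (v t - ω ^ 2 * φ t - c * φ' t) • Bvec 4 =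
      ![deriv x1 t, deriv (deriv x1) t, deriv (deriv (deriv x1)) t,
        v t - ω ^ 2 * φ t - c * φ' t] := by
    funext i
    fin_cases i <;>
      (simp [Amat, Bvec, Matrix.mulVec, dotProduct, Fin.sum_univ_four, hX t,
        Matrix.vecHead, Matrix.vecTail, Function.comp,
        show ((0 : Fin 4) : ℕ) = 0 from rfl, show ((1 : Fin 4) : ℕ) = 1 from rfl,
        show ((2 : Fin 4) : ℕ) = 2 from rfl, show ((3 : Fin 4) : ℕ) = 3 from rfl])
  rw [hvec, hXe, hasDerivAt_pi]
  intro i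
  fin_cases i
  · show HasDerivAt (fun x => x1 x) (deriv x1 t) t
    exact (h1 t).congr_deriv (h1 t).deriv.symm
  · show HasDerivAt (fun x => deriv x1 x) (deriv (deriv x1) t) t
    exact (h2 t).congr_deriv (h2 t).deriv.symm
  · show HasDerivAt (fun x => deriv (deriv x1) x) (deriv (deriv (deriv x1)) t) t
    rw [hd3, hd2]
    exact hφ t
  · show HasDerivAt (fun x => deriv (deriv (deriv x1)) x)
      (v t - ω ^ 2 * φ t - c * φ' t) t
    rw [hd3]
    exact (hφ' t).congr_deriv (by linarith [heq1 t])
end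

section
/- Let c ≥ 0, ω > 0, and let φ, ψ : ℝ → ℝ be smooth and satisfy the nonlinear damped system φ̈ + c φ̇ + ω² sin φ = v and ψ̈ = v for some v : ℝ → ℝ. Then x₁ := (ψ − φ)/ω² − (c/ω⁴)(ψ̇ − φ̇) + (c²/ω⁴) φ satisfies ẍ₁(t) = sin φ(t) + (c/ω²) φ̇(t) (1 − cos φ(t)) for all t; in particular, for c ≠ 0, ẍ₁ does not reduce to sin φ. -/
/-- for the nonlinear damped system `φ̈ + cφ̇ + ω² sin φ = v`,
`ψ̈ = v`, the damping-corrected output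
`x₁ = (ψ-φ)/ω² - (c/ω⁴)(ψ̇-φ̇) + (c²/ω⁴)φ` satisfies
`ẍ₁ = sin φ + (c/ω²) φ̇ (1 - cos φ)`. -/
theorem stmt14 (c ω : ℝ) (hc : 0 ≤ c) (hω : 0 < ω)
    (φ φ' φ'' ψ ψ' ψ'' v : ℝ → ℝ)
    (hφ : ∀ t, HasDerivAt φ (φ' t) t) (hφ' : ∀ t, HasDerivAt φ' (φ'' t) t)
    (hψ : ∀ t, HasDerivAt ψ (ψ' t) t) (hψ' : ∀ t, HasDerivAt ψ' (ψ'' t) t)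
    (heq1 : ∀ t, φ'' t + c * φ' t + ω ^ 2 * Real.sin (φ t) = v t)
    (heq2 : ∀ t, ψ'' t = v t)
    (x1 : ℝ → ℝ)
    (hx1 : ∀ t, x1 t = (ψ t - φ t) / ω ^ 2 - (c / ω ^ 4) * (ψ' t - φ' t)
        + (c ^ 2 / ω ^ 4) * φ t) :
    ∀ t, deriv (deriv x1) t
      = Real.sin (φ t) + (c / ω ^ 2) * φ' t * (1 - Real.cos (φ t)) := by
  have hω2 : (ω : ℝ) ^ 2 ≠ 0 := pow_ne_zero _ hω.ne'
  have hω4 : (ω : ℝ) ^ 4 ≠ 0 := pow_ne_zero _ hω.ne'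
  have hdd : ∀ t, ψ'' t - φ'' t = c * φ' t + ω ^ 2 * Real.sin (φ t) := by
    intro t
    have := heq1 t
    rw [heq2 t]
    linarith
  have key : ∀ t, HasDerivAt x1
      ((ψ' t - φ' t) / ω ^ 2 - (c / ω ^ 2) * Real.sin (φ t)) t := by
    intro t
    have h : HasDerivAt (fun t => (ψ t - φ t) / ω ^ 2 - (c / ω ^ 4) * (ψ' t - φ' t)
        + (c ^ 2 / ω ^ 4) * φ t)
        ((ψ' t - φ' t) / ω ^ 2 - (c / ω ^ 4) * (ψ'' t - φ'' t)
          + (c ^ 2 / ω ^ 4) * φ' t) t :=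
      ((((hψ t).sub (hφ t)).div_const _).sub
        (((hψ' t).sub (hφ' t)).const_mul _)).add ((hφ t).const_mul _)
    have hx1e : x1 = fun t => (ψ t - φ t) / ω ^ 2 - (c / ω ^ 4) * (ψ' t - φ' t)
        + (c ^ 2 / ω ^ 4) * φ t := funext hx1
    rw [hx1e]
    convert h using 1
    rw [hdd t]
    field_simp
    ring
  have hd1 : deriv x1 = fun t => (ψ' t - φ' t) / ω ^ 2 - (c / ω ^ 2) * Real.sin (φ t) :=
    funext fun t => (key t).deriv
  intro t
  rw [hd1]
  have h2 : HasDerivAt (fun t => (ψ' t - φ' t) / ω ^ 2 - (c / ω ^ 2) * Real.sin (φ t))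
      ((ψ'' t - φ'' t) / ω ^ 2 - (c / ω ^ 2) * (Real.cos (φ t) * φ' t)) t :=
    (((hψ' t).sub (hφ' t)).div_const _).sub ((hφ t).sin.const_mul _)
  rw [h2.deriv, hdd t]
  field_simp
  ring
end
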